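/- Fix α, β ∈ ℝ∖{0}, x₁, x₂ ∈ ℝ and (t,x) ∈ ℝ². For 0 < μ < √(α²+β²)/2 let B_μ(t,x) be the Gardner breather with 5th-order velocities δ_μ := −α⁴ + 10α²β² − 5β⁴ − 10μ²(3β² − α²) and γ_μ := −β⁴ + 10α²β² − 5α⁴ − 10μ²(β² − 3α²). Then as μ → 0⁺, B_μ(t,x) converges to B₀(t,x), the 5th-order mKdV breather 2∂ₓ arctan((β/α)·sin(α(x + δ₀t + x₁))/cosh(β(x + γ₀t + x₂))) with δ₀ := −α⁴ + 10α²β² − 5β⁴, γ₀ := −β⁴ + 10α²β² − 5α⁴. -/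

import Mathlib

open Real

noncomputable def gardnerG (α β μ δ γ x₁ x₂ : ℝ) (t x : ℝ) : ℝ :=
  (β * Real.sqrt (α ^ 2 + β ^ 2) / (α * Real.sqrt (α ^ 2 + β ^ 2 - 4 * μ ^ 2)))
      * Real.sin (α * (x + δ * t + x₁))
    - (2 * β * μ / (α ^ 2 + β ^ 2 - 4 * μ ^ 2)) * Real.exp (β * (x + γ * t + x₂))

noncomputable def gardnerF (α β μ δ γ x₁ x₂ : ℝ) (t x : ℝ) : ℝ :=
  Real.cosh (β * (x + γ * t + x₂))
    - (2 * β * μ / (α * Real.sqrt (α ^ 2 + β ^ 2 - 4 * μ ^ 2) * Real.sqrt (α ^ 2 + β ^ 2)))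
      * (α * Real.cos (α * (x + δ * t + x₁)) - β * Real.sin (α * (x + δ * t + x₁)))

/-- The Gardner breather `B = 2 (Gₓ F - G Fₓ)/(F² + G²)`. -/
noncomputable def gardnerB (α β μ δ γ x₁ x₂ : ℝ) (t x : ℝ) : ℝ :=
  2 * (deriv (gardnerG α β μ δ γ x₁ x₂ t) x * gardnerF α β μ δ γ x₁ x₂ t x
      - gardnerG α β μ δ γ x₁ x₂ t x * deriv (gardnerF α β μ δ γ x₁ x₂ t) x)
    / ((gardnerF α β μ δ γ x₁ x₂ t x) ^ 2 + (gardnerG α β μ δ γ x₁ x₂ t x) ^ 2)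

/-- Partial derivative in `x`. -/
noncomputable def pdx (u : ℝ → ℝ → ℝ) (t x : ℝ) : ℝ := deriv (u t) x

/-- `n`-th iterated partial derivative in `x`. -/
noncomputable def pdxn (n : ℕ) (u : ℝ → ℝ → ℝ) (t x : ℝ) : ℝ := deriv^[n] (u t) x

/-- Partial derivative in `t`. -/
noncomputable def pdt (u : ℝ → ℝ → ℝ) (t x : ℝ) : ℝ := deriv (fun s => u s x) t

/-!
At `μ = 0` the coefficients `a₂, a₃` vanish and `a₁ = β / α`, so `G / F` is the mKdV quotient
`(β / α) sin(α y₁) / cosh(β y₂)`, and `B = 2 ∂ₓ arctan (G / F)` because `F = cosh > 0`. Near `μ = 0`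
(where `Δ > 0`) the coefficients, hence `G`, `F`, `Gₓ`, `Fₓ` and `B`, depend continuously on `μ`
together with the velocities.
-/

theorem deriv_arctan_div {g f : ℝ → ℝ} {x : ℝ} (hg : DifferentiableAt ℝ g x)
    (hf : DifferentiableAt ℝ f x) (hfx : f x ≠ 0) :
    deriv (fun y => arctan (g y / f y)) x =
      (deriv g x * f x - g x * deriv f x) / (f x ^ 2 + g x ^ 2) := by
  refine (hg.hasDerivAt.div hf.hasDerivAt hfx).arctan.deriv.trans ?_
  simp only [Pi.div_apply]
  field_simp

theorem hasDerivAt_mul_add_add (a b c x : ℝ) :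
    HasDerivAt (fun y : ℝ => a * (y + b + c)) a x := by
  simpa using (((hasDerivAt_id x).add_const b).add_const c).const_mul a

section Gardner

variable {α β μ δ γ x₁ x₂ t : ℝ}

theorem differentiable_gardnerG : Differentiable ℝ (gardnerG α β μ δ γ x₁ x₂ t) := by
  unfold gardnerG; fun_prop

theorem differentiable_gardnerF : Differentiable ℝ (gardnerF α β μ δ γ x₁ x₂ t) := by
  unfold gardnerF; fun_prop

theorem deriv_gardnerG (x : ℝ) :
    deriv (gardnerG α β μ δ γ x₁ x₂ t) x =
      β * √(α ^ 2 + β ^ 2) / (α * √(α ^ 2 + β ^ 2 - 4 * μ ^ 2))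
          * (cos (α * (x + δ * t + x₁)) * α)
        - 2 * β * μ / (α ^ 2 + β ^ 2 - 4 * μ ^ 2) * (exp (β * (x + γ * t + x₂)) * β) :=
  ((((hasDerivAt_mul_add_add α (δ * t) x₁ x).sin).const_mul _).sub
    (((hasDerivAt_mul_add_add β (γ * t) x₂ x).exp).const_mul _)).deriv

theorem deriv_gardnerF (x : ℝ) :
    deriv (gardnerF α β μ δ γ x₁ x₂ t) x =
      sinh (β * (x + γ * t + x₂)) * β
        - 2 * β * μ / (α * √(α ^ 2 + β ^ 2 - 4 * μ ^ 2) * √(α ^ 2 + β ^ 2))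
          * (α * (-sin (α * (x + δ * t + x₁)) * α) - β * (cos (α * (x + δ * t + x₁)) * α)) :=
  ((hasDerivAt_mul_add_add β (γ * t) x₂ x).cosh.sub
    ((((hasDerivAt_mul_add_add α (δ * t) x₁ x).cos.const_mul α).sub
      ((hasDerivAt_mul_add_add α (δ * t) x₁ x).sin.const_mul β)).const_mul _)).deriv

theorem gardnerB_eq_two_mul_deriv_arctan (x : ℝ) (hF : gardnerF α β μ δ γ x₁ x₂ t x ≠ 0) :
    gardnerB α β μ δ γ x₁ x₂ t x =
      2 * deriv (fun y =>
        arctan (gardnerG α β μ δ γ x₁ x₂ t y / gardnerF α β μ δ γ x₁ x₂ t y)) x := by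
  rw [deriv_arctan_div (differentiable_gardnerG x) (differentiable_gardnerF x) hF, gardnerB,
    mul_div_assoc]

theorem gardnerG_zero (hα : α ≠ 0) :
    gardnerG α β 0 δ γ x₁ x₂ t = fun x => β / α * sin (α * (x + δ * t + x₁)) := by
  have hs : √(α ^ 2 + β ^ 2) ≠ 0 := by positivity
  ext x
  simp [gardnerG, mul_div_mul_right _ _ hs]

theorem gardnerF_zero :
    gardnerF α β 0 δ γ x₁ x₂ t = fun x => cosh (β * (x + γ * t + x₂)) := by
  ext x
  simp [gardnerF]

theorem gardnerB_zero (hα : α ≠ 0) (x : ℝ) :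
    gardnerB α β 0 δ γ x₁ x₂ t x =
      2 * deriv (fun y =>
        arctan (β / α * sin (α * (y + δ * t + x₁)) / cosh (β * (y + γ * t + x₂)))) x := by
  have hF : gardnerF α β 0 δ γ x₁ x₂ t x ≠ 0 := by
    rw [gardnerF_zero]
    exact (cosh_pos _).ne'
  rw [gardnerB_eq_two_mul_deriv_arctan x hF, gardnerG_zero hα, gardnerF_zero]

end Gardner

theorem continuousAt_gardnerB {α β x₁ x₂ t x μ₀ : ℝ} {δ γ : ℝ → ℝ} (hα : α ≠ 0)
    (hΔ : 0 < α ^ 2 + β ^ 2 - 4 * μ₀ ^ 2) (hδ : ContinuousAt δ μ₀) (hγ : ContinuousAt γ μ₀)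
    (hFG : gardnerF α β μ₀ (δ μ₀) (γ μ₀) x₁ x₂ t x ^ 2
      + gardnerG α β μ₀ (δ μ₀) (γ μ₀) x₁ x₂ t x ^ 2 ≠ 0) :
    ContinuousAt (fun μ => gardnerB α β μ (δ μ) (γ μ) x₁ x₂ t x) μ₀ := by
  simp only [gardnerB, deriv_gardnerG, deriv_gardnerF]
  unfold gardnerF gardnerG at hFG ⊢
  fun_prop (disch := first | assumption | exact hΔ.ne' | positivity)

theorem gardner_breather_converges_to_mkdv_breather_general
    (α β x₁ x₂ t x : ℝ) (hα : α ≠ 0) :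
    Filter.Tendsto
      (fun μ : ℝ => gardnerB α β μ
        (-α ^ 4 + 10 * α ^ 2 * β ^ 2 - 5 * β ^ 4 - 10 * μ ^ 2 * (3 * β ^ 2 - α ^ 2))
        (-β ^ 4 + 10 * α ^ 2 * β ^ 2 - 5 * α ^ 4 - 10 * μ ^ 2 * (β ^ 2 - 3 * α ^ 2))
        x₁ x₂ t x)
      (nhdsWithin 0 (Set.Ioo 0 (Real.sqrt (α ^ 2 + β ^ 2) / 2)))
      (nhds (2 * deriv (fun y =>
        Real.arctan ((β / α) *
          Real.sin (α * (y + (-α ^ 4 + 10 * α ^ 2 * β ^ 2 - 5 * β ^ 4) * t + x₁)) /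
          Real.cosh (β * (y + (-β ^ 4 + 10 * α ^ 2 * β ^ 2 - 5 * α ^ 4) * t + x₂)))) x)) := by
  convert (continuousAt_gardnerB (μ₀ := 0) hα ?_ ?_ ?_ ?_).tendsto.mono_left nhdsWithin_le_nhds
    using 2
  · simp [gardnerB_zero hα]
  · norm_num
    positivity
  · fun_prop
  · fun_prop
  · rw [gardnerF_zero]
    positivity

theorem gardner_breather_converges_to_mkdv_breather
    (α β x₁ x₂ t x : ℝ) (hα : α ≠ 0) (hβ : β ≠ 0) :
    Filter.Tendsto
      (fun μ : ℝ => gardnerB α β μ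
        (-α ^ 4 + 10 * α ^ 2 * β ^ 2 - 5 * β ^ 4 - 10 * μ ^ 2 * (3 * β ^ 2 - α ^ 2))
        (-β ^ 4 + 10 * α ^ 2 * β ^ 2 - 5 * α ^ 4 - 10 * μ ^ 2 * (β ^ 2 - 3 * α ^ 2))
        x₁ x₂ t x)
      (nhdsWithin 0 (Set.Ioo 0 (Real.sqrt (α ^ 2 + β ^ 2) / 2)))
      (nhds (2 * deriv (fun y =>
        Real.arctan ((β / α) *
          Real.sin (α * (y + (-α ^ 4 + 10 * α ^ 2 * β ^ 2 - 5 * β ^ 4) * t + x₁)) /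
          Real.cosh (β * (y + (-β ^ 4 + 10 * α ^ 2 * β ^ 2 - 5 * α ^ 4) * t + x₂)))) x)) :=
  gardner_breather_converges_to_mkdv_breather_general α β x₁ x₂ t x hα
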